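/- arXiv:1802.07123 — 4 statements merged into one kernel-verified Lean document; each statement's English description precedes it below -/
import Mathlib

section
/- Every shift-invariant closed proper subset X ⊊ k^Γ has log₂k-dimensional Hausdorff content equal to 0 (with respect to the metric dist). -/
open scoped ENNReal

/-- The left shift action: `(γ · x)(δ) = x(δγ)`. -/
def lshift {Γ : Type*} [Group Γ] {k : ℕ} (γ : Γ) (x : Γ → Fin k) : Γ → Fin k :=
  fun δ => x (δ * γ)

/-- Invariance under the left shift action. -/
def ShiftInvariant {Γ : Type*} [Group Γ] {k : ℕ} (X : Set (Γ → Fin k)) : Prop :=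
  ∀ γ : Γ, ∀ x ∈ X, lshift γ x ∈ X

/-- The `h`-dimensional Hausdorff content of `X`: the infimum over (countable) covers of `X`
by open balls of the sum of the `h`-th powers of their diameters. -/
noncomputable def hausdorffContent {A : Type*} (m : MetricSpace A) (h : ℝ) (X : Set A) :
    ℝ≥0∞ :=
  letI := m
  ⨅ (c : ℕ → A) (r : ℕ → ℝ) (_ : X ⊆ ⋃ i, Metric.ball (c i) (r i)),
    ∑' i, EMetric.diam (Metric.ball (c i) (r i)) ^ h

/-- Existence of translates making the blocks pairwise disjoint. -/
lemma exists_translates {Γ : Type*} [Group Γ] [Infinite Γ] (e : ℕ ≃ Γ) (N : ℕ) :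
    ∀ M : ℕ, ∃ g : Fin M → Γ,
      ∀ (j j' : Fin M) (i i' : Fin N), e i * g j = e i' * g j' → j = j' := by
  intro M
  induction M with
  | zero => exact ⟨fun j => 1, fun j => j.elim0⟩
  | succ M ih =>
    obtain ⟨g, hg⟩ := ih
    obtain ⟨γ, hγ⟩ := (Set.finite_range
      (fun t : Fin M × Fin N × Fin N =>
        (e (t.2.1 : ℕ))⁻¹ * (e (t.2.2 : ℕ) * g t.1))).infinite_compl.nonempty
    have hγ' : ∀ (j' : Fin M) (i i' : Fin N), e (i : ℕ) * γ ≠ e (i' : ℕ) * g j' := by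
      intro j' i i' hEq
      exact hγ ⟨(j', i, i'), by
        show (e (i:ℕ))⁻¹ * (e (i':ℕ) * g j') = γ
        rw [← hEq, inv_mul_cancel_left]⟩
    refine ⟨Fin.cons γ g, ?_⟩
    intro j j' i i' hEq
    induction j using Fin.cases with
    | zero =>
      induction j' using Fin.cases with
      | zero => rfl
      | succ j' =>
        simp only [Fin.cons_zero, Fin.cons_succ] at hEq
        exact absurd hEq (hγ' j' i i')
    | succ j =>
      induction j' using Fin.cases with
      | zero =>
        simp only [Fin.cons_zero, Fin.cons_succ] at hEq
        exact absurd hEq.symm (hγ' j i' i)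
      | succ j' =>
        simp only [Fin.cons_succ] at hEq
        exact congrArg Fin.succ (hg j j' i i' hEq)

theorem aux_subshift {Γ : Type*} [Group Γ] [Countable Γ] [Infinite Γ] {k : ℕ}
    (hk : 2 ≤ k) (e : ℕ ≃ Γ) [m : MetricSpace (Γ → Fin k)]
    (hdist : ∀ x y : Γ → Fin k, x ≠ y →
      dist x y = (2 : ℝ) ^ (-((sInf {i : ℕ | x (e i) ≠ y (e i)} : ℕ) : ℤ)))
    (X : Set (Γ → Fin k)) (hcl : @IsClosed _ m.toUniformSpace.toTopologicalSpace X)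
    (hinv : ShiftInvariant X) (hproper : X ≠ Set.univ) :
    hausdorffContent m (Real.logb 2 k) X = 0 := by
  classical
  set h := Real.logb 2 k with hh_def
  have hk1 : (1:ℝ) < (k:ℝ) := by exact_mod_cast lt_of_lt_of_le one_lt_two hk
  have hh : 0 < h := Real.logb_pos one_lt_two hk1
  -- basic distance estimates
  have hdist_le : ∀ (y c : Γ → Fin k) (n : ℕ), (∀ i < n, y (e i) = c (e i)) →
      dist y c ≤ (2:ℝ) ^ (-(n:ℤ)) := by
    intro y c n hagree
    rcases eq_or_ne y c with rfl | hne
    · rw [dist_self]; positivity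
    · rw [hdist y c hne]
      have hSne : {i : ℕ | y (e i) ≠ c (e i)}.Nonempty := by
        obtain ⟨γ, hγ⟩ := Function.ne_iff.mp hne
        exact ⟨e.symm γ, by simpa using hγ⟩
      have hmem := Nat.sInf_mem hSne
      have hn : n ≤ sInf {i : ℕ | y (e i) ≠ c (e i)} := by
        by_contra hlt
        push_neg at hlt
        exact hmem (hagree _ hlt)
      apply zpow_le_zpow_right₀ one_le_two
      omega
  have hdist_lb : ∀ (y c : Γ → Fin k) (i : ℕ), y (e i) ≠ c (e i) →
      (2:ℝ) ^ (-(i:ℤ)) ≤ dist y c := by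
    intro y c i hi
    have hne : y ≠ c := fun hEq => hi (by rw [hEq])
    rw [hdist y c hne]
    have hle : sInf {j : ℕ | y (e j) ≠ c (e j)} ≤ i := Nat.sInf_le hi
    apply zpow_le_zpow_right₀ one_le_two
    omega
  -- forbidden pattern
  obtain ⟨z, hz⟩ : ∃ z, z ∉ X := by
    by_contra hno; push_neg at hno; exact hproper (Set.eq_univ_of_forall hno)
  have hopen : @IsOpen _ m.toUniformSpace.toTopologicalSpace Xᶜ := hcl.isOpen_compl
  obtain ⟨r, hr0, hr⟩ := Metric.isOpen_iff.mp hopen z hz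
  obtain ⟨N0, hN0⟩ := exists_pow_lt_of_lt_one hr0 (by norm_num : (1:ℝ)/2 < 1)
  set N := N0 + 1 with hN_def
  have hforb : ∀ y : Γ → Fin k, (∀ i < N, y (e i) = z (e i)) → y ∉ X := by
    intro y hy
    have hlt : dist y z < r := by
      have h1 : dist y z ≤ (2:ℝ) ^ (-(N:ℤ)) := hdist_le y z N hy
      have h2 : (2:ℝ) ^ (-(N:ℤ)) ≤ (1/2 : ℝ) ^ N0 := by
        rw [one_div, inv_pow, ← zpow_natCast (2:ℝ) N0, ← zpow_neg]
        apply zpow_le_zpow_right₀ one_le_two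
        omega
      linarith
    exact hr (Metric.mem_ball.mpr hlt)
  -- avoidance at every translate
  have hav : ∀ x ∈ X, ∀ γ : Γ, ∃ i < N, x (e i * γ) ≠ z (e i) := by
    intro x hx γ
    by_contra hno
    push_neg at hno
    exact hforb (lshift γ x) (fun i hi => hno i hi) (hinv γ x hx)
  -- the ratio q
  have hkE0 : (k:ℝ≥0∞) ≠ 0 := Nat.cast_ne_zero.mpr (by omega)
  have hkET : (k:ℝ≥0∞) ≠ ⊤ := ENNReal.natCast_ne_top k
  set q : ℝ≥0∞ := ((k ^ N - 1 : ℕ) : ℝ≥0∞) * ((k:ℝ≥0∞)⁻¹) ^ N with hq_def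
  have hq1 : q < 1 := by
    have hq_eq : q = ((k ^ N - 1 : ℕ) : ℝ≥0∞) / (k:ℝ≥0∞) ^ N := by
      rw [hq_def, div_eq_mul_inv, ← ENNReal.inv_pow]
    rw [hq_eq, ENNReal.div_lt_iff (Or.inl (pow_ne_zero _ hkE0))
      (Or.inl (ENNReal.pow_ne_top hkET)), one_mul]
    have : ((k ^ N - 1 : ℕ) : ℝ≥0∞) < ((k ^ N : ℕ) : ℝ≥0∞) := by
      exact_mod_cast Nat.sub_lt (pow_pos (by omega : 0 < k) N) one_pos
    simpa using this
  -- rpow computation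
  have h2k : (2:ℝ) ^ h = (k:ℝ) := Real.rpow_logb two_pos (by norm_num) (by positivity)
  have hpowE : ∀ n : ℕ, (ENNReal.ofReal ((2:ℝ) ^ (-(n:ℤ)))) ^ h = ((k:ℝ≥0∞)⁻¹) ^ n := by
    intro n
    have hreal : ((2:ℝ) ^ (-(n:ℤ))) ^ h = ((k:ℝ) ^ n)⁻¹ := by
      have hcast : ((-(n:ℤ) : ℤ) : ℝ) = -(n:ℝ) := by push_cast; ring
      rw [← Real.rpow_intCast 2 (-(n:ℤ)), hcast, ← Real.rpow_natCast (k:ℝ) n,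
        ← Real.rpow_mul (by norm_num), mul_comm, Real.rpow_mul (by norm_num), h2k,
        ← Real.rpow_neg_one ((k:ℝ) ^ (n:ℝ)), ← Real.rpow_mul (by positivity)]
      norm_num
    rw [ENNReal.ofReal_rpow_of_pos (by positivity), hreal,
      ENNReal.ofReal_inv_of_pos (by positivity), ENNReal.ofReal_pow (by positivity),
      ENNReal.ofReal_natCast, ENNReal.inv_pow]
  -- main bound: content ≤ q ^ M for every M
  have hboundM : ∀ M : ℕ, hausdorffContent m h X ≤ q ^ M := by
    intro M
    obtain ⟨g, hg⟩ := exists_translates e N M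
    set τ : Fin M × Fin N → ℕ := fun p => e.symm (e (p.2 : ℕ) * g p.1) with hτ_def
    have hτinj : Function.Injective τ := by
      intro p p' hEq
      have hEq' : e (p.2 : ℕ) * g p.1 = e (p'.2 : ℕ) * g p'.1 := by
        have := congrArg e hEq
        simpa [hτ_def] using this
      have hj : p.1 = p'.1 := hg _ _ _ _ hEq'
      rw [hj] at hEq'
      have hi : (p.2 : ℕ) = (p'.2 : ℕ) := e.injective (mul_right_cancel hEq')
      exact Prod.ext hj (Fin.ext hi)
    set n : ℕ := (Finset.univ.sup τ) + 1 with hn_def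
    have hτlt : ∀ p, τ p < n := fun p =>
      Nat.lt_succ_of_le (Finset.le_sup (Finset.mem_univ p))
    set τ' : Fin M × Fin N → Fin n := fun p => ⟨τ p, hτlt p⟩ with hτ'_def
    have hτ'inj : Function.Injective τ' := by
      intro p p' hEq
      exact hτinj (congrArg Fin.val hEq)
    have hMN : M * N ≤ n := by
      have := Fintype.card_le_of_injective τ' hτ'inj
      simpa using this
    set res : (Γ → Fin k) → (Fin n → Fin k) := fun x i => x (e (i : ℕ)) with hres_def
    set W : Finset (Fin n → Fin k) := Finset.univ.filter (fun w => ∃ x ∈ X, res x = w)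
      with hW_def
    set k0 : Fin k := ⟨0, by omega⟩ with hk0_def
    set extF : (Fin n → Fin k) → (Γ → Fin k) :=
      fun w γ => if hlt : e.symm γ < n then w ⟨e.symm γ, hlt⟩ else k0 with hextF_def
    have hext_agree : ∀ (w : Fin n → Fin k) (i : Fin n), extF w (e (i : ℕ)) = w i := by
      intro w i
      simp [hextF_def, i.isLt]
    -- counting
    have hcard : W.card ≤ (k ^ N - 1) ^ M * k ^ (n - M * N) := by
      set zz : Fin N → Fin k := fun i => z (e (i : ℕ)) with hzz_def
      have hW_prop : ∀ w ∈ W, ∀ j : Fin M, (fun i : Fin N => w (τ' (j, i))) ≠ zz := by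
        intro w hw j hEq
        obtain ⟨x, hxX, hxw⟩ := (Finset.mem_filter.mp hw).2
        obtain ⟨i, hiN, hix⟩ := hav x hxX (g j)
        apply hix
        have h1 : w (τ' (j, ⟨i, hiN⟩)) = zz ⟨i, hiN⟩ := congrFun hEq ⟨i, hiN⟩
        rw [← hxw] at h1
        simpa [hres_def, hτ'_def, hτ_def, hzz_def] using h1
      let Φ : {w // w ∈ W} →
          (Fin M → {v : Fin N → Fin k // v ≠ zz}) × ({a : Fin n // a ∉ Set.range τ'} → Fin k) :=
        fun w => (fun j => ⟨fun i => w.1 (τ' (j, i)), hW_prop w.1 w.2 j⟩, fun a => w.1 a.1)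
      have hΦinj : Function.Injective Φ := by
        intro w w' hEq
        have h1 := congrArg Prod.fst hEq
        have h2 := congrArg Prod.snd hEq
        apply Subtype.ext
        funext a
        by_cases ha : a ∈ Set.range τ'
        · obtain ⟨p, hp⟩ := ha
          have h3 := congrArg Subtype.val (congrFun h1 p.1)
          have h4 := congrFun h3 p.2
          simpa [hp, Φ] using h4
        · exact congrFun h2 ⟨a, ha⟩
      have hcardB : Fintype.card {v : Fin N → Fin k // v ≠ zz} = k ^ N - 1 := by
        have := Fintype.card_subtype_compl (fun v : Fin N → Fin k => v = zz)
        simp only [Fintype.card_subtype_eq] at this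
        simp only [Fintype.card_fun, Fintype.card_fin] at this ⊢
        exact this
      have hcardC : Fintype.card {a : Fin n // a ∉ Set.range τ'} = n - M * N := by
        have h1 : Fintype.card {a : Fin n // a ∈ Set.range τ'} = M * N := by
          rw [Fintype.card_congr (Equiv.ofInjective τ' hτ'inj).symm]
          simp
        have := Fintype.card_subtype_compl (fun a : Fin n => a ∈ Set.range τ')
        rw [h1] at this
        simpa using this
      calc W.card = Fintype.card {w // w ∈ W} := (Fintype.card_coe W).symm
        _ ≤ Fintype.card ((Fin M → {v : Fin N → Fin k // v ≠ zz}) ×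
              ({a : Fin n // a ∉ Set.range τ'} → Fin k)) :=
            Fintype.card_le_of_injective Φ hΦinj
        _ = (k ^ N - 1) ^ M * k ^ (n - M * N) := by
            rw [Fintype.card_prod, Fintype.card_fun, Fintype.card_fun, hcardB, hcardC]
            simp
    -- the cover
    set ρ : ℝ := (3/2) * (2:ℝ) ^ (-(n:ℤ)) with hρ_def
    have hρpos : 0 < (2:ℝ) ^ (-(n:ℤ)) := by positivity
    set L := W.toList with hL_def
    set cc : ℕ → (Γ → Fin k) := fun i =>
      if hi : i < L.length then extF (L.get ⟨i, hi⟩) else fun _ => k0 with hcc_def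
    set rr : ℕ → ℝ := fun i => if i < L.length then ρ else -1 with hrr_def
    have hball_sub : ∀ (w : Fin n → Fin k) (y : Γ → Fin k),
        y ∈ Metric.ball (extF w) ρ → ∀ i : Fin n, y (e (i : ℕ)) = w i := by
      intro w y hy i
      by_contra hne
      have h1 : (2:ℝ) ^ (-((i:ℕ):ℤ)) ≤ dist y (extF w) :=
        hdist_lb y (extF w) i (fun hEq => hne (hEq.trans (hext_agree w i)))
      have h2 : dist y (extF w) < ρ := Metric.mem_ball.mp hy
      have h3 : ρ < (2:ℝ) ^ (-((i:ℕ):ℤ)) := by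
        have hle : (2:ℝ) ^ (-(n:ℤ) + 1) ≤ (2:ℝ) ^ (-((i:ℕ):ℤ)) := by
          apply zpow_le_zpow_right₀ one_le_two
          have := i.isLt
          omega
        have heq : (2:ℝ) ^ (-(n:ℤ) + 1) = 2 * (2:ℝ) ^ (-(n:ℤ)) := by
          rw [zpow_add₀ (two_ne_zero), zpow_one]; ring
        rw [heq] at hle
        rw [hρ_def]
        linarith
      linarith
    have hco : X ⊆ ⋃ i, Metric.ball (cc i) (rr i) := by
      intro x hx
      have hmem : res x ∈ W := Finset.mem_filter.mpr ⟨Finset.mem_univ _, x, hx, rfl⟩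
      have hmemL : res x ∈ L := Finset.mem_toList.mpr hmem
      obtain ⟨j, hj⟩ := List.mem_iff_get.mp hmemL
      refine Set.mem_iUnion.mpr ⟨j.1, ?_⟩
      have hcceq : cc j.1 = extF (res x) := by
        rw [hcc_def]
        simp only [j.2, dif_pos]
        rw [Fin.eta, hj]
      have hrreq : rr j.1 = ρ := by rw [hrr_def]; simp [j.2]
      rw [Metric.mem_ball, hcceq, hrreq]
      have hd : dist x (extF (res x)) ≤ (2:ℝ) ^ (-(n:ℤ)) := by
        apply hdist_le x (extF (res x)) n
        intro i hi
        exact (hext_agree (res x) ⟨i, hi⟩).symm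
      rw [hρ_def]
      linarith
    have hcontent_le : hausdorffContent m h X ≤
        ∑' i, EMetric.diam (Metric.ball (cc i) (rr i)) ^ h := by
      exact iInf_le_of_le cc (iInf_le_of_le rr (iInf_le_of_le hco le_rfl))
    have hsum : ∑' i, EMetric.diam (Metric.ball (cc i) (rr i)) ^ h ≤
        (W.card : ℝ≥0∞) * ((k:ℝ≥0∞)⁻¹) ^ n := by
      have hpt : ∀ i, EMetric.diam (Metric.ball (cc i) (rr i)) ^ h ≤
          (if i < L.length then ((k:ℝ≥0∞)⁻¹) ^ n else 0) := by
        intro i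
        by_cases hi : i < L.length
        · rw [if_pos hi]
          have hcceq : cc i = extF (L.get ⟨i, hi⟩) := by rw [hcc_def]; simp [hi]
          have hrreq : rr i = ρ := by rw [hrr_def]; simp [hi]
          rw [hcceq, hrreq, ← hpowE n]
          apply ENNReal.rpow_le_rpow _ hh.le
          apply EMetric.diam_le
          intro y hy y' hy'
          rw [edist_dist]
          apply ENNReal.ofReal_le_ofReal
          apply hdist_le y y' n
          intro j hj
          rw [hball_sub _ y hy ⟨j, hj⟩, hball_sub _ y' hy' ⟨j, hj⟩]
        · rw [if_neg hi]
          have hrreq : rr i = -1 := by rw [hrr_def]; simp [hi]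
          rw [hrreq, Metric.ball_eq_empty.mpr (by norm_num),
            (show EMetric.diam (∅ : Set (Γ → Fin k)) = 0 from Metric.ediam_empty),
            ENNReal.zero_rpow_of_pos hh]
      calc ∑' i, EMetric.diam (Metric.ball (cc i) (rr i)) ^ h
          ≤ ∑' i, (if i < L.length then ((k:ℝ≥0∞)⁻¹) ^ n else 0) :=
            ENNReal.tsum_le_tsum hpt
        _ = ∑ i ∈ Finset.range L.length, (if i < L.length then ((k:ℝ≥0∞)⁻¹) ^ n else 0) := by
            apply tsum_eq_sum
            intro i hi
            rw [if_neg (by simpa using hi)]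
        _ = (W.card : ℝ≥0∞) * ((k:ℝ≥0∞)⁻¹) ^ n := by
            rw [Finset.sum_ite_of_true (by intro i hi; simpa using hi), Finset.sum_const,
              Finset.card_range, nsmul_eq_mul]
            congr 1
            rw [hL_def, Finset.length_toList]
    have harith : (W.card : ℝ≥0∞) * ((k:ℝ≥0∞)⁻¹) ^ n ≤ q ^ M := by
      have h1 : (W.card : ℝ≥0∞) ≤ (((k ^ N - 1) ^ M * k ^ (n - M * N) : ℕ) : ℝ≥0∞) := by
        exact_mod_cast hcard
      have hsplit : ((k:ℝ≥0∞)⁻¹) ^ n = ((k:ℝ≥0∞)⁻¹) ^ (n - M*N) * ((k:ℝ≥0∞)⁻¹) ^ (M*N) := by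
        rw [← pow_add, Nat.sub_add_cancel hMN]
      have hcanc : (k:ℝ≥0∞) ^ (n - M*N) * ((k:ℝ≥0∞)⁻¹) ^ (n - M*N) = 1 := by
        rw [← mul_pow, ENNReal.mul_inv_cancel hkE0 hkET, one_pow]
      calc (W.card : ℝ≥0∞) * ((k:ℝ≥0∞)⁻¹) ^ n
          ≤ (((k ^ N - 1) ^ M * k ^ (n - M * N) : ℕ) : ℝ≥0∞) * ((k:ℝ≥0∞)⁻¹) ^ n :=
            mul_le_mul_left h1 _
        _ = ((k ^ N - 1 : ℕ) : ℝ≥0∞) ^ M * ((k:ℝ≥0∞)⁻¹) ^ (M*N) *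
              ((k:ℝ≥0∞) ^ (n - M*N) * ((k:ℝ≥0∞)⁻¹) ^ (n - M*N)) := by
            rw [Nat.cast_mul, Nat.cast_pow, Nat.cast_pow, hsplit]
            ring
        _ = ((k ^ N - 1 : ℕ) : ℝ≥0∞) ^ M * ((k:ℝ≥0∞)⁻¹) ^ (M*N) := by
            rw [hcanc, mul_one]
        _ = q ^ M := by rw [hq_def, mul_pow, ← pow_mul, mul_comm M N]
    exact hcontent_le.trans (hsum.trans harith)
  -- conclude
  have hlim : Filter.Tendsto (fun M : ℕ => q ^ M) Filter.atTop (nhds 0) :=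
    ENNReal.tendsto_pow_atTop_nhds_zero_of_lt_one hq1
  exact le_antisymm (ge_of_tendsto' hlim hboundM) zero_le

/-- Every subshift `X ⊊ k^Γ` (a proper, closed, shift-invariant subset) has
`log₂ k`-dimensional Hausdorff content zero, with respect to the metric
`dist(x,y) = 2^{-min{i : x(γᵢ) ≠ y(γᵢ)}}`. -/
theorem hausdorffContent_of_proper_subshift
    {Γ : Type*} [Group Γ] [Countable Γ] [Infinite Γ] {k : ℕ} (hk : 2 ≤ k) (e : ℕ ≃ Γ)
    (m : MetricSpace (Γ → Fin k))
    (hdist : ∀ x y : Γ → Fin k, x ≠ y →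
      m.dist x y = (2 : ℝ) ^ (-((sInf {i : ℕ | x (e i) ≠ y (e i)} : ℕ) : ℤ)))
    (X : Set (Γ → Fin k))
    (hcl : @IsClosed _ m.toUniformSpace.toTopologicalSpace X)
    (hinv : ShiftInvariant X) (hproper : X ≠ Set.univ) :
    hausdorffContent m (Real.logb 2 k) X = 0 := by
  letI := m
  exact aux_subshift hk e hdist X hcl hinv hproper
end

section
/- (Lovász Local Lemma, symmetric general form with lower bound) Let ℬ be a finite collection of events in a probability space. For each B ∈ ℬ let N(B) ⊆ ℬ \ {B} be such that B is independent of the sigma-algebra generated by ℬ \ (N(B) ∪ {B}). If ω : ℬ → [0,1) satisfies P[B] ≤ ω(B)·∏_{B'∈N(B)}(1−ω(B')) for all B, then P[⋀_{B∈ℬ} ¬B] ≥ ∏_{B∈ℬ}(1−ω(B)) > 0. -/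
open MeasureTheory ProbabilityTheory

/-- **Lovász Local Lemma** (general form, with the quantitative lower bound).
Let `ℬ` be a finite collection of events `B i` in a probability space. For each `i ∈ ℬ`,
let `N i ⊆ ℬ \ {i}` be such that `B i` is independent of the σ-algebra generated by the
events indexed by `ℬ \ (N i ∪ {i})`. If `ω : ℬ → [0,1)` satisfies
`P[B i] ≤ ω i · ∏_{j ∈ N i} (1 − ω j)` for all `i ∈ ℬ`, then
`P[⋂_{i ∈ ℬ} (B i)ᶜ] ≥ ∏_{i ∈ ℬ} (1 − ω i) > 0`. -/
theorem lovasz_local_lemma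
    {Ω : Type*} [MeasurableSpace Ω] (μ : Measure Ω) [IsProbabilityMeasure μ]
    {ι : Type*} [DecidableEq ι] (ℬ : Finset ι) (B : ι → Set Ω)
    (hmeas : ∀ i ∈ ℬ, MeasurableSet (B i))
    (N : ι → Finset ι) (hN : ∀ i ∈ ℬ, N i ⊆ ℬ.erase i)
    (hindep : ∀ i ∈ ℬ, Indep (MeasurableSpace.generateFrom {B i})
      (MeasurableSpace.generateFrom (B '' ((ℬ : Set ι) \ ((N i : Set ι) ∪ {i})))) μ)
    (ω : ι → ℝ) (hω : ∀ i ∈ ℬ, ω i ∈ Set.Ico (0 : ℝ) 1)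
    (hbound : ∀ i ∈ ℬ, (μ (B i)).toReal ≤ ω i * ∏ j ∈ N i, (1 - ω j)) :
    ENNReal.ofReal (∏ i ∈ ℬ, (1 - ω i)) ≤ μ (⋂ i ∈ ℬ, (B i)ᶜ) ∧
      0 < ∏ i ∈ ℬ, (1 - ω i) := by
  classical
  have hωB : ∀ i ∈ ℬ, 0 ≤ ω i ∧ ω i < 1 := fun i hi => ⟨(hω i hi).1, (hω i hi).2⟩
  have hNB : ∀ i ∈ ℬ, (N i : Set ι) ⊆ ℬ := by
    intro i hi j hj
    exact Finset.mem_of_mem_erase (hN i hi hj)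
  have hprodpos : ∀ S : Finset ι, S ⊆ ℬ → 0 < ∏ i ∈ S, (1 - ω i) := by
    intro S hS
    exact Finset.prod_pos fun i hi => by linarith [(hω i (hS hi)).2]
  have hmInter : ∀ S : Finset ι, S ⊆ ℬ → MeasurableSet (⋂ j ∈ S, (B j)ᶜ) := by
    intro S hS
    exact MeasurableSet.biInter S.countable_toSet fun j hj => (hmeas j (hS hj)).compl
  have hfin : ∀ s : Set Ω, μ s ≠ ⊤ := fun s => measure_ne_top μ s
  -- the decomposition of the measure of an intersection when inserting an event
  have hsplit : ∀ (S : Finset ι), S ⊆ ℬ → ∀ i ∈ ℬ,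
      (μ (⋂ j ∈ insert i S, (B j)ᶜ)).toReal
        = (μ (⋂ j ∈ S, (B j)ᶜ)).toReal - (μ (B i ∩ ⋂ j ∈ S, (B j)ᶜ)).toReal := by
    intro S hS i hi
    have h1 : μ ((⋂ j ∈ S, (B j)ᶜ) ∩ B i) + μ ((⋂ j ∈ S, (B j)ᶜ) \ B i)
        = μ (⋂ j ∈ S, (B j)ᶜ) := measure_inter_add_diff _ (hmeas i hi)
    have h2 : (⋂ j ∈ insert i S, (B j)ᶜ) = (⋂ j ∈ S, (B j)ᶜ) \ B i := by
      rw [Finset.set_biInter_insert, Set.diff_eq, Set.inter_comm]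
    have h3 : (⋂ j ∈ S, (B j)ᶜ) ∩ B i = B i ∩ ⋂ j ∈ S, (B j)ᶜ := Set.inter_comm _ _
    rw [h2]
    rw [h3] at h1
    have := congrArg ENNReal.toReal h1
    rw [ENNReal.toReal_add (hfin _) (hfin _)] at this
    linarith
  -- key conditional bound
  have key : ∀ (n : ℕ) (S : Finset ι), S.card ≤ n → S ⊆ ℬ → ∀ i ∈ ℬ, i ∉ S →
      (μ (B i ∩ ⋂ j ∈ S, (B j)ᶜ)).toReal ≤ ω i * (μ (⋂ j ∈ S, (B j)ᶜ)).toReal := by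
    intro n
    induction n with
    | zero =>
      intro S hcard hS i hi hiS
      have hSe : S = ∅ := Finset.card_eq_zero.mp (le_antisymm hcard (Nat.zero_le _))
      subst hSe
      simp only [Finset.notMem_empty, Set.iInter_of_empty, Set.iInter_univ, Set.inter_univ,
        measure_univ, ENNReal.toReal_one, mul_one]
      calc (μ (B i)).toReal ≤ ω i * ∏ j ∈ N i, (1 - ω j) := hbound i hi
        _ ≤ ω i * 1 := by
            apply mul_le_mul_of_nonneg_left _ (hω i hi).1
            apply Finset.prod_le_one
            · intro j hj; linarith [(hω j (hNB i hi hj)).2]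
            · intro j hj; linarith [(hω j (hNB i hi hj)).1]
        _ = ω i := mul_one _
    | succ n ih =>
      intro S hcard hS i hi hiS
      set S1 : Finset ι := S ∩ N i with hS1def
      set S2 : Finset ι := S \ N i with hS2def
      have hS1N : S1 ⊆ N i := Finset.inter_subset_right
      have hS1S : S1 ⊆ S := Finset.inter_subset_left
      have hS2S : S2 ⊆ S := Finset.sdiff_subset
      have hunion : S2 ∪ S1 = S := by
        ext x; simp only [hS1def, hS2def, Finset.mem_union, Finset.mem_sdiff, Finset.mem_inter]
        tauto
      -- independence step
      have hBi_meas : MeasurableSet[MeasurableSpace.generateFrom {B i}] (B i) :=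
        MeasurableSpace.measurableSet_generateFrom rfl
      have hS2_meas : MeasurableSet[MeasurableSpace.generateFrom
          (B '' ((ℬ : Set ι) \ ((N i : Set ι) ∪ {i})))] (⋂ j ∈ S2, (B j)ᶜ) := by
        apply MeasurableSet.biInter S2.countable_toSet
        intro j hj
        replace hj : j ∈ S2 := hj
        have hjS : j ∈ S := hS2S hj
        have hjN : j ∉ N i := by
          simp only [hS2def, Finset.mem_sdiff] at hj; exact hj.2
        have hji : j ≠ i := fun h => hiS (h ▸ hjS)
        refine (MeasurableSpace.measurableSet_generateFrom ?_).compl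
        exact ⟨j, ⟨hS hjS, by simp [hjN, hji]⟩, rfl⟩
      have hind : μ (B i ∩ ⋂ j ∈ S2, (B j)ᶜ) = μ (B i) * μ (⋂ j ∈ S2, (B j)ᶜ) :=
        (Indep_iff _ _ μ).mp (hindep i hi) _ _ hBi_meas hS2_meas
      -- peeling lemma
      have peel : ∀ T : Finset ι, T ⊆ S1 →
          (∏ j ∈ T, (1 - ω j)) * (μ (⋂ j ∈ S2, (B j)ᶜ)).toReal
            ≤ (μ (⋂ j ∈ S2 ∪ T, (B j)ᶜ)).toReal := by
        intro T
        induction T using Finset.induction with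
        | empty => intro _; simp
        | @insert j T hjT ihT =>
          intro hsub
          have hTsub : T ⊆ S1 := fun x hx => hsub (Finset.mem_insert_of_mem hx)
          have hj1 : j ∈ S1 := hsub (Finset.mem_insert_self _ _)
          have hjN : j ∈ N i := hS1N hj1
          have hjB : j ∈ ℬ := hNB i hi hjN
          have hjS2 : j ∉ S2 := by
            simp only [hS2def, Finset.mem_sdiff]; exact fun h => h.2 hjN
          have hjS2T : j ∉ S2 ∪ T := by
            simp only [Finset.mem_union]; tauto
          have hsubS : S2 ∪ T ⊆ S := by
            intro x hx
            rcases Finset.mem_union.mp hx with h | h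
            · exact hS2S h
            · exact hS1S (hTsub h)
          have hsubB : S2 ∪ T ⊆ ℬ := hsubS.trans hS
          have hcard' : (S2 ∪ T).card ≤ n := by
            have h1 : S2 ∪ T ⊆ S.erase j := by
              intro x hx
              exact Finset.mem_erase.mpr ⟨fun h => hjS2T (h ▸ hx), hsubS hx⟩
            have h2 := Finset.card_le_card h1
            have h3 := Finset.card_erase_of_mem (hS1S hj1)
            omega
          have hk := ih (S2 ∪ T) hcard' hsubB j hjB hjS2T
          have hins : S2 ∪ insert j T = insert j (S2 ∪ T) := Finset.union_insert j S2 T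
          rw [hins, hsplit (S2 ∪ T) hsubB j hjB]
          have hI := ihT hTsub
          have hωj := hωB j hjB
          rw [Finset.prod_insert hjT]
          have hms2 : 0 ≤ (μ (⋂ j ∈ S2, (B j)ᶜ)).toReal := ENNReal.toReal_nonneg
          have hprodT : 0 ≤ ∏ j ∈ T, (1 - ω j) :=
            le_of_lt (hprodpos T (fun x hx => hS (hS1S (hTsub hx))))
          nlinarith [mul_le_mul_of_nonneg_left hI (by linarith [hωj.2] : (0:ℝ) ≤ 1 - ω j)]
      have hpeel := peel S1 (le_refl S1)
      rw [hunion] at hpeel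
      -- monotonicity
      have hmono : (μ (B i ∩ ⋂ j ∈ S, (B j)ᶜ)).toReal
          ≤ (μ (B i ∩ ⋂ j ∈ S2, (B j)ᶜ)).toReal := by
        apply ENNReal.toReal_mono (hfin _)
        apply measure_mono
        apply Set.inter_subset_inter_right
        exact Set.biInter_mono (by exact_mod_cast hS2S) (fun _ _ => le_refl _)
      have hprodsub : ∏ j ∈ N i, (1 - ω j) ≤ ∏ j ∈ S1, (1 - ω j) := by
        have := Finset.prod_sdiff (f := fun j => (1 - ω j)) hS1N
        have hle1 : ∏ j ∈ N i \ S1, (1 - ω j) ≤ 1 := by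
          apply Finset.prod_le_one
          · intro j hj
            linarith [(hω j (hNB i hi (Finset.mem_sdiff.mp hj).1)).2]
          · intro j hj
            linarith [(hω j (hNB i hi (Finset.mem_sdiff.mp hj).1)).1]
        have hpos : 0 ≤ ∏ j ∈ S1, (1 - ω j) :=
          le_of_lt (hprodpos S1 (hS1S.trans hS))
        nlinarith [this]
      have hms2 : 0 ≤ (μ (⋂ j ∈ S2, (B j)ᶜ)).toReal := ENNReal.toReal_nonneg
      have hωi := hωB i hi
      calc (μ (B i ∩ ⋂ j ∈ S, (B j)ᶜ)).toReal
          ≤ (μ (B i ∩ ⋂ j ∈ S2, (B j)ᶜ)).toReal := hmono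
        _ = (μ (B i)).toReal * (μ (⋂ j ∈ S2, (B j)ᶜ)).toReal := by
            rw [hind, ENNReal.toReal_mul]
        _ ≤ (ω i * ∏ j ∈ N i, (1 - ω j)) * (μ (⋂ j ∈ S2, (B j)ᶜ)).toReal :=
            mul_le_mul_of_nonneg_right (hbound i hi) hms2
        _ ≤ (ω i * ∏ j ∈ S1, (1 - ω j)) * (μ (⋂ j ∈ S2, (B j)ᶜ)).toReal := by
            apply mul_le_mul_of_nonneg_right _ hms2
            exact mul_le_mul_of_nonneg_left hprodsub hωi.1
        _ = ω i * ((∏ j ∈ S1, (1 - ω j)) * (μ (⋂ j ∈ S2, (B j)ᶜ)).toReal) := by ring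
        _ ≤ ω i * (μ (⋂ j ∈ S, (B j)ᶜ)).toReal :=
            mul_le_mul_of_nonneg_left hpeel hωi.1
  -- the lower bound for arbitrary subsets
  have lower : ∀ S : Finset ι, S ⊆ ℬ →
      (∏ i ∈ S, (1 - ω i)) ≤ (μ (⋂ j ∈ S, (B j)ᶜ)).toReal := by
    intro S
    induction S using Finset.induction with
    | empty => intro _; simp
    | @insert i S hiS ihS =>
      intro hsub
      have hSB : S ⊆ ℬ := fun x hx => hsub (Finset.mem_insert_of_mem hx)
      have hiB : i ∈ ℬ := hsub (Finset.mem_insert_self _ _)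
      have hk := key S.card S (le_refl _) hSB i hiB hiS
      have hI := ihS hSB
      rw [hsplit S hSB i hiB, Finset.prod_insert hiS]
      have hωi := hωB i hiB
      have hpos : 0 ≤ ∏ j ∈ S, (1 - ω j) := le_of_lt (hprodpos S hSB)
      nlinarith [mul_le_mul_of_nonneg_left hI (by linarith [hωi.2] : (0:ℝ) ≤ 1 - ω i)]
  refine ⟨?_, hprodpos ℬ (le_refl _)⟩
  exact ENNReal.ofReal_le_of_le_toReal (lower ℬ (le_refl _))
end

section
/- (Counting version of the LLL for colorings) Let X be a finite set, k ≥ 2, and Φ a set of finite partial functions from X to k. Suppose ω : Φ → [0,1) satisfies k^{−|dom φ|} ≤ ω(φ)·∏_{ψ ∈ N(φ,Φ)}(1−ω(ψ)) for all φ ∈ Φ, where N(φ,Φ) := {ψ ∈ Φ : dom(φ) ∩ dom(ψ) ≠ ∅, ψ ≠ φ}. Then the number of functions f : X → k avoiding all patterns in Φ (i.e., f ⊉ φ for every φ ∈ Φ) is at least k^{|X|}·∏_{φ∈Φ}(1−ω(φ)). -/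
/-- A finite partial function from `X` to `k` (a "pattern"). -/
structure PatternOn (X : Type*) (k : ℕ) where
  dom : Finset X
  val : X → Fin k

/-- `f : X → k` extends the partial function `φ`, i.e. `f ⊇ φ`. -/
def PatternOn.ExtendedBy {X : Type*} {k : ℕ} (φ : PatternOn X k) (f : X → Fin k) : Prop :=
  ∀ g ∈ φ.dom, f g = φ.val g

/-- The neighborhood `N(φ, Φ) = {ψ ∈ Φ : ψ ≠ φ, dom(φ) ∩ dom(ψ) ≠ ∅}`. -/
def nbhd {X : Type*} [DecidableEq X] {k : ℕ} (φ : PatternOn X k)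
    (Φ : Set (PatternOn X k)) : Set (PatternOn X k) :=
  {ψ ∈ Φ | ψ ≠ φ ∧ (φ.dom ∩ ψ.dom).Nonempty}

/-- `Φ` is correct for the LLL, with witness `ω`: `ω` takes values in `[0,1)` on `Φ` and
`k^{-|dom φ|} ≤ ω(φ) · ∏_{ψ ∈ N(φ,Φ)} (1 − ω(ψ))` for every `φ ∈ Φ`. -/
def IsLLLWitness {X : Type*} [DecidableEq X] {k : ℕ} (Φ : Set (PatternOn X k))
    (ω : PatternOn X k → ℝ) : Prop :=
  (∀ φ ∈ Φ, ω φ ∈ Set.Ico (0 : ℝ) 1) ∧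
  ∀ φ ∈ Φ, ((k : ℝ))⁻¹ ^ φ.dom.card ≤ ω φ * ∏' ψ : nbhd φ Φ, (1 - ω ψ.1)

instance {X : Type*} [Finite X] {k : ℕ} : Finite (PatternOn X k) :=
  Finite.of_injective
    (fun φ => (fun x => x ∈ φ.dom, φ.val) : PatternOn X k → (X → Prop) × (X → Fin k))
    (fun a b h => by
      cases a; cases b
      simp only [Prod.ext_iff] at h
      obtain ⟨h1, h2⟩ := h
      congr 1
      ext x
      exact iff_of_eq (congrFun h1 x))

section Aux
variable {X : Type*} [Fintype X] [DecidableEq X] {k : ℕ}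

attribute [local instance] Classical.propDecidable

/-- Set of colorings avoiding all patterns in `S`. -/
def Avd (S : Finset (PatternOn X k)) : Set (X → Fin k) :=
  {f | ∀ ψ ∈ S, ¬ ψ.ExtendedBy f}

def Extn (φ : PatternOn X k) : Set (X → Fin k) := {f | φ.ExtendedBy f}

set_option linter.unusedSectionVars false in
lemma avd_split (S : Finset (PatternOn X k)) (ψ : PatternOn X k) :
    (Avd S).ncard = (Avd (insert ψ S)).ncard + (Avd S ∩ Extn ψ).ncard := by
  rw [← Set.ncard_union_eq]
  · congr 1
    ext f
    simp only [Avd, Extn, Set.mem_union, Set.mem_inter_iff, Set.mem_setOf_eq,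
      Finset.mem_insert]
    constructor
    · intro hf
      by_cases h : ψ.ExtendedBy f
      · exact Or.inr ⟨hf, h⟩
      · exact Or.inl (fun χ hχ => hχ.elim (fun e => e ▸ h) (hf χ))
    · rintro (h | ⟨h, _⟩) χ hχ
      · exact h χ (Or.inr hχ)
      · exact h χ hχ
  · rw [Set.disjoint_left]
    rintro f hf ⟨-, hf2⟩
    exact hf ψ (Finset.mem_insert_self _ _) hf2

lemma indep (φ : PatternOn X k) (S : Finset (PatternOn X k))
    (h : ∀ ψ ∈ S, ∀ x ∈ ψ.dom, x ∉ φ.dom) :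
    (Avd S ∩ Extn φ).ncard * k ^ φ.dom.card = (Avd S).ncard := by
  have e : (Avd S) ≃ (Avd S ∩ Extn φ : Set (X → Fin k)) × (φ.dom → Fin k) :=
  { toFun := fun f =>
      (⟨fun x => if x ∈ φ.dom then φ.val x else f.1 x, by
        refine ⟨fun ψ hψ hext => f.2 ψ hψ (fun g hg => ?_), fun g hg => if_pos hg⟩
        simpa [h ψ hψ g hg] using hext g hg⟩,
       fun x => f.1 x.1)
    invFun := fun p =>
      ⟨fun x => if hx : x ∈ φ.dom then p.2 ⟨x, hx⟩ else p.1.1 x, by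
        intro ψ hψ hext
        refine p.1.2.1 ψ hψ (fun g hg => ?_)
        simpa [h ψ hψ g hg] using hext g hg⟩
    left_inv := fun f => by
      ext x
      simp only
      split_ifs with hx
      · rfl
      · rfl
    right_inv := fun p => by
      refine Prod.ext (Subtype.ext (funext fun x => ?_)) (funext fun x => ?_)
      · simp only
        split_ifs with hx
        · exact (p.1.2.2 x hx).symm
        · rfl
      · simp only
        rw [dif_pos x.2] }

  have h1 : Nat.card (Avd S : Set (X → Fin k)) =
      Nat.card (Avd S ∩ Extn φ : Set (X → Fin k)) * Nat.card (φ.dom → Fin k) := by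
    rw [Nat.card_congr e, Nat.card_prod]
  have h2 : Nat.card (φ.dom → Fin k) = k ^ φ.dom.card := by
    rw [Nat.card_fun, Nat.card_eq_fintype_card, Fintype.card_fin,
      Nat.card_eq_fintype_card, Fintype.card_coe]
  rw [← Nat.card_coe_set_eq, ← Nat.card_coe_set_eq, h1, h2]
end Aux

section Main
variable {X : Type*} [Fintype X] [DecidableEq X] {k : ℕ}

attribute [local instance] Classical.propDecidable


set_option linter.unusedSectionVars false in
lemma peel (ω : PatternOn X k → ℝ) (S₂ : Finset (PatternOn X k)) :
    ∀ T : Finset (PatternOn X k), Disjoint S₂ T →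
    (∀ ψ ∈ T, 0 ≤ 1 - ω ψ) →
    (∀ ψ ∈ T, ∀ U : Finset (PatternOn X k), S₂ ⊆ U → U ⊆ S₂ ∪ T.erase ψ → ψ ∉ U →
      ((Avd U ∩ Extn ψ).ncard : ℝ) ≤ ω ψ * (Avd U).ncard) →
    (∏ ψ ∈ T, (1 - ω ψ)) * (Avd S₂).ncard ≤ ((Avd (S₂ ∪ T)).ncard : ℝ) := by
  intro T
  induction T using Finset.induction_on with
  | empty => intro _ _ _; simp
  | insert _ _ ha =>
    rename_i a T IH
    intro hdisj hnn hkey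
    have haS₂ : a ∉ S₂ := fun h => (Finset.disjoint_left.mp hdisj h) (Finset.mem_insert_self a T)
    have IH' := IH (hdisj.mono_right (Finset.subset_insert a T))
      (fun ψ hψ => hnn ψ (Finset.mem_insert_of_mem hψ))
      (fun ψ hψ U hU1 hU2 hU3 => hkey ψ (Finset.mem_insert_of_mem hψ) U hU1
        (hU2.trans (Finset.union_subset_union_right
          (Finset.erase_subset_erase ψ (Finset.subset_insert a T)))) hU3)
    have hkey_a := hkey a (Finset.mem_insert_self a T) (S₂ ∪ T) Finset.subset_union_left
      (by rw [Finset.erase_insert ha]) (by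
        simp only [Finset.mem_union]
        rintro (h | h)
        · exact haS₂ h
        · exact ha h)
    have hsplit := avd_split (S₂ ∪ T) a
    have hnn_a := hnn a (Finset.mem_insert_self a T)
    have hprod_nn : (0:ℝ) ≤ ∏ ψ ∈ T, (1 - ω ψ) :=
      Finset.prod_nonneg (fun ψ hψ => hnn ψ (Finset.mem_insert_of_mem hψ))
    have hbase_nn : (0:ℝ) ≤ ((Avd S₂).ncard : ℝ) := Nat.cast_nonneg _
    rw [Finset.prod_insert ha, Finset.union_insert]
    have h1 : ((Avd (insert a (S₂ ∪ T))).ncard : ℝ)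
        ≥ (1 - ω a) * ((Avd (S₂ ∪ T)).ncard : ℝ) := by
      have : ((Avd (S₂ ∪ T)).ncard : ℝ)
          = ((Avd (insert a (S₂ ∪ T))).ncard : ℝ) + ((Avd (S₂ ∪ T) ∩ Extn a).ncard : ℝ) := by
        exact_mod_cast congrArg (Nat.cast (R := ℝ)) hsplit
      nlinarith [hkey_a]
    calc (1 - ω a) * (∏ ψ ∈ T, (1 - ω ψ)) * ((Avd S₂).ncard : ℝ)
        = (1 - ω a) * ((∏ ψ ∈ T, (1 - ω ψ)) * ((Avd S₂).ncard : ℝ)) := by ring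
      _ ≤ (1 - ω a) * ((Avd (S₂ ∪ T)).ncard : ℝ) :=
          mul_le_mul_of_nonneg_left IH' hnn_a
      _ ≤ ((Avd (insert a (S₂ ∪ T))).ncard : ℝ) := h1
end Main
section Main2
variable {X : Type*} [Fintype X] [DecidableEq X] {k : ℕ}
attribute [local instance] Classical.propDecidable

set_option linter.unusedSectionVars false in
lemma key (Φ : Set (PatternOn X k)) (ω : PatternOn X k → ℝ) (hω : IsLLLWitness Φ ω)
    (hk : 1 ≤ k) (n : ℕ) :
    ∀ S : Finset (PatternOn X k), S.card ≤ n → ↑S ⊆ Φ → ∀ φ ∈ Φ, φ ∉ S →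
      ((Avd S ∩ Extn φ).ncard : ℝ) ≤ ω φ * ((Avd S).ncard : ℝ) := by
  induction n using Nat.strong_induction_on with
  | _ n IH =>
  intro S hcard hSΦ φ hφ hφS
  set d := φ.dom.card with hd
  set S₁ : Finset (PatternOn X k) := S.filter (fun ψ => (φ.dom ∩ ψ.dom).Nonempty) with hS₁
  set S₂ : Finset (PatternOn X k) := S.filter (fun ψ => ¬(φ.dom ∩ ψ.dom).Nonempty) with hS₂
  have hS₁S : S₁ ⊆ S := Finset.filter_subset _ _
  have hS₂S : S₂ ⊆ S := Finset.filter_subset _ _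
  have hunion : S₂ ∪ S₁ = S := by
    rw [hS₁, hS₂, Finset.union_comm, Finset.filter_union_filter_not_eq]
  have hdisj : Disjoint S₂ S₁ := by
    rw [Finset.disjoint_left]
    intro ψ h2 h1
    exact (Finset.mem_filter.mp h2).2 (Finset.mem_filter.mp h1).2
  -- monotonicity
  have mono : ((Avd S ∩ Extn φ).ncard : ℝ) ≤ ((Avd S₂ ∩ Extn φ).ncard : ℝ) := by
    have : Avd S ⊆ Avd S₂ := fun f hf ψ hψ => hf ψ (hS₂S hψ)
    exact_mod_cast Set.ncard_le_ncard (Set.inter_subset_inter_left _ this) (Set.toFinite _)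
  -- independence
  have hind := indep φ S₂ (fun ψ hψ x hx hx' =>
    (Finset.mem_filter.mp hψ).2 ⟨x, Finset.mem_inter.mpr ⟨hx', hx⟩⟩)
  have hk0 : (0:ℝ) < (k:ℝ) ^ d := by positivity
  have hindR : ((Avd S₂ ∩ Extn φ).ncard : ℝ) = ((Avd S₂).ncard : ℝ) * ((k:ℝ))⁻¹ ^ d := by
    have : ((Avd S₂ ∩ Extn φ).ncard : ℝ) * (k:ℝ) ^ d = ((Avd S₂).ncard : ℝ) := by
      exact_mod_cast congrArg (Nat.cast (R := ℝ)) hind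
    rw [inv_pow, ← this]
    field_simp
  -- the LLL hypothesis
  have hLLL := hω.2 φ hφ
  -- tprod as finite product
  letI : Fintype ↥(nbhd φ Φ) := Fintype.ofFinite _
  have htp : (∏' ψ : nbhd φ Φ, (1 - ω ψ.1)) = ∏ ψ ∈ (nbhd φ Φ).toFinset, (1 - ω ψ) := by
    rw [tprod_fintype]
    exact Finset.prod_set_coe (f := fun ψ => 1 - ω ψ) (nbhd φ Φ)
  have hS₁N : S₁ ⊆ (nbhd φ Φ).toFinset := by
    intro ψ hψ
    rw [Set.mem_toFinset]
    refine ⟨hSΦ (hS₁S hψ), fun h => hφS (h ▸ hS₁S hψ), (Finset.mem_filter.mp hψ).2⟩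
  have hfac : ∀ ψ ∈ (nbhd φ Φ).toFinset, 0 ≤ 1 - ω ψ ∧ 1 - ω ψ ≤ 1 := by
    intro ψ hψ
    rw [Set.mem_toFinset] at hψ
    have := hω.1 ψ hψ.1
    constructor <;> [linarith [this.2]; linarith [this.1]]
  have hprodle : (∏ ψ ∈ (nbhd φ Φ).toFinset, (1 - ω ψ)) ≤ ∏ ψ ∈ S₁, (1 - ω ψ) := by
    rw [← Finset.prod_sdiff hS₁N]
    have h1 : (∏ ψ ∈ (nbhd φ Φ).toFinset \ S₁, (1 - ω ψ)) ≤ 1 :=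
      Finset.prod_le_one (fun ψ hψ => (hfac ψ (Finset.mem_sdiff.mp hψ).1).1)
        (fun ψ hψ => (hfac ψ (Finset.mem_sdiff.mp hψ).1).2)
    have h2 : (0:ℝ) ≤ ∏ ψ ∈ S₁, (1 - ω ψ) :=
      Finset.prod_nonneg (fun ψ hψ => (hfac ψ (hS₁N hψ)).1)
    nlinarith
  have hωφ : 0 ≤ ω φ := (hω.1 φ hφ).1
  -- peel
  have hpeel := peel ω S₂ S₁ hdisj (fun ψ hψ => (hfac ψ (hS₁N hψ)).1) ?_
  · calc ((Avd S ∩ Extn φ).ncard : ℝ)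
        ≤ ((Avd S₂ ∩ Extn φ).ncard : ℝ) := mono
      _ = ((Avd S₂).ncard : ℝ) * ((k:ℝ))⁻¹ ^ d := hindR
      _ ≤ ((Avd S₂).ncard : ℝ) * (ω φ * ∏' ψ : nbhd φ Φ, (1 - ω ψ.1)) :=
          mul_le_mul_of_nonneg_left hLLL (Nat.cast_nonneg _)
      _ ≤ ((Avd S₂).ncard : ℝ) * (ω φ * ∏ ψ ∈ S₁, (1 - ω ψ)) := by
          rw [htp]
          exact mul_le_mul_of_nonneg_left (mul_le_mul_of_nonneg_left hprodle hωφ)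
            (Nat.cast_nonneg _)
      _ = ω φ * ((∏ ψ ∈ S₁, (1 - ω ψ)) * ((Avd S₂).ncard : ℝ)) := by ring
      _ ≤ ω φ * ((Avd (S₂ ∪ S₁)).ncard : ℝ) := mul_le_mul_of_nonneg_left hpeel hωφ
      _ = ω φ * ((Avd S).ncard : ℝ) := by rw [hunion]
  · -- hkey for peel, from strong induction hypothesis
    intro ψ hψ U hU1 hU2 hU3
    have hψS : ψ ∈ S := hS₁S hψ
    have hUS : U ⊆ S.erase ψ := by
      intro x hx
      rcases Finset.mem_union.mp (hU2 hx) with h | h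
      · exact Finset.mem_erase.mpr ⟨fun e => Finset.disjoint_left.mp hdisj h (e ▸ hψ), hS₂S h⟩
      · exact Finset.mem_erase.mpr ⟨(Finset.mem_erase.mp h).1, hS₁S (Finset.mem_erase.mp h).2⟩
    have hcardU : U.card < n := by
      have h1 : U.card ≤ (S.erase ψ).card := Finset.card_le_card hUS
      have h2 : (S.erase ψ).card < S.card := Finset.card_erase_lt_of_mem hψS
      have h3 : 1 ≤ S.card := Finset.card_pos.mpr ⟨ψ, hψS⟩
      omega
    exact IH U.card hcardU U le_rfl (fun x hx => hSΦ (Finset.erase_subset _ _ (hUS hx)))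
      ψ (hSΦ hψS) hU3
end Main2

/-- **Counting version of the LLL.** If `X` is finite and `ω` witnesses the correctness of
`Φ` for the LLL, then the number of `f : X → k` avoiding every pattern in `Φ` is at least
`k^{|X|} · ∏_{φ ∈ Φ} (1 − ω(φ))`. -/
theorem counting_LLL {X : Type*} [Fintype X] [DecidableEq X] {k : ℕ} (hk : 2 ≤ k)
    (Φ : Set (PatternOn X k)) (ω : PatternOn X k → ℝ) (hω : IsLLLWitness Φ ω) :
    (k : ℝ) ^ Fintype.card X * ∏' φ : Φ, (1 - ω φ.1) ≤
      Nat.card {f : X → Fin k | ∀ φ ∈ Φ, ¬ φ.ExtendedBy f} := by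
  classical
  have hk1 : 1 ≤ k := le_trans (by norm_num) hk
  letI : Fintype ↥Φ := Fintype.ofFinite _
  have htp : (∏' φ : Φ, (1 - ω φ.1)) = ∏ φ ∈ Φ.toFinset, (1 - ω φ) := by
    rw [tprod_fintype]
    exact Finset.prod_set_coe (f := fun φ => 1 - ω φ) Φ
  have hset : {f : X → Fin k | ∀ φ ∈ Φ, ¬ φ.ExtendedBy f} = Avd Φ.toFinset := by
    ext f
    simp [Avd, Set.mem_toFinset]
  have hcard : Nat.card {f : X → Fin k | ∀ φ ∈ Φ, ¬ φ.ExtendedBy f}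
      = (Avd (Φ.toFinset : Finset (PatternOn X k))).ncard := by
    rw [hset, Nat.card_coe_set_eq]
  have hbase : ((Avd (∅ : Finset (PatternOn X k))).ncard : ℝ) = (k:ℝ) ^ Fintype.card X := by
    have h1 : Avd (∅ : Finset (PatternOn X k)) = (Set.univ : Set (X → Fin k)) := by
      ext f; simp [Avd]
    rw [h1, Set.ncard_univ, Nat.card_eq_fintype_card, Fintype.card_fun, Fintype.card_fin]
    push_cast
    rfl
  have hfac : ∀ ψ ∈ Φ.toFinset, (0:ℝ) ≤ 1 - ω ψ := by
    intro ψ hψ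
    rw [Set.mem_toFinset] at hψ
    linarith [(hω.1 ψ hψ).2]
  have hpeel := peel ω ∅ Φ.toFinset (Finset.disjoint_empty_left _) hfac ?_
  · rw [Finset.empty_union] at hpeel
    rw [htp, hcard, mul_comm, ← hbase]
    exact hpeel
  · intro ψ hψ U _ hU2 hU3
    rw [Set.mem_toFinset] at hψ
    have hUΦ : ↑U ⊆ Φ := by
      intro x hx
      have := hU2 hx
      rw [Finset.empty_union] at this
      exact Set.mem_toFinset.mp (Finset.erase_subset _ _ this)
    exact key Φ ω hω hk1 U.card U le_rfl hUΦ ψ hψ hU3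
end

section
/- (Compactness version of the LLL) Let X be a (possibly infinite) set and Φ a set of finite partial functions from X to k. If Φ is correct for the LLL, i.e., there is ω : Φ → [0,1) with k^{−|dom φ|} ≤ ω(φ)·∏_{ψ∈N(φ,Φ)}(1−ω(ψ)) for all φ ∈ Φ, then there exists f : X → k with f ⊉ φ for all φ ∈ Φ. -/
open Finset

namespace LLLAux

variable {X : Type*} [DecidableEq X] {k : ℕ} [DecidableEq (PatternOn X k)]

/-- the ambient finite space of assignments on `D` -/
abbrev Om (D : Finset X) (k : ℕ) := (↥D → Fin k)

/-- `g` extends the pattern `ψ` (within the coordinates of `D`) -/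
abbrev extP (D : Finset X) (g : Om D k) (ψ : PatternOn X k) : Prop :=
  ∀ x : ↥D, ↑x ∈ ψ.dom → g x = ψ.val ↑x

/-- good set: assignments avoiding all patterns in `S` -/
def G (D : Finset X) (S : Finset (PatternOn X k)) : Finset (Om D k) :=
  univ.filter (fun g => ∀ ψ ∈ S, ¬ extP D g ψ)

lemma mem_G {D : Finset X} {S : Finset (PatternOn X k)} {g : Om D k} :
    g ∈ G D S ↔ ∀ ψ ∈ S, ¬ extP D g ψ := by simp [G]

lemma G_anti {D : Finset X} {S S' : Finset (PatternOn X k)} (h : S' ⊆ S) :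
    G D S ⊆ G D S' := fun g hg => mem_G.2 fun ψ hψ => mem_G.1 hg ψ (h hψ)

lemma G_insert (D : Finset X) (ψ : PatternOn X k) (S : Finset (PatternOn X k)) :
    G D (insert ψ S) = (G D S).filter (fun g => ¬ extP D g ψ) := by
  ext g
  simp only [mem_G, mem_filter, forall_mem_insert]
  tauto

lemma card_G_insert (D : Finset X) (ψ : PatternOn X k) (S : Finset (PatternOn X k)) :
    ((G D S).filter (fun g => extP D g ψ)).card + (G D (insert ψ S)).card = (G D S).card := by
  rw [G_insert]
  exact Finset.card_filter_add_card_filter_not _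

/-- Slicing/independence lemma: if membership in `B` only depends on coordinates
outside `C`, then the number of elements of `B` agreeing with `v` on `C` is
`|B| / k^|C|`. -/
lemma slice (D : Finset X) (C : Finset X) (hC : C ⊆ D) (B : Finset (Om D k))
    (hB : ∀ g g' : Om D k, (∀ x : ↥D, ↑x ∉ C → g x = g' x) → g ∈ B → g' ∈ B)
    (v : X → Fin k) :
    B.card = k ^ C.card * (B.filter (fun g => ∀ x : ↥D, ↑x ∈ C → g x = v ↑x)).card := by
  classical
  set r : Om D k → (↥C → Fin k) := fun g x => g ⟨↑x, hC x.2⟩ with hr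
  have h1 : B.card = ∑ w : ↥C → Fin k, (B.filter (fun g => r g = w)).card :=
    Finset.card_eq_sum_card_fiberwise (fun g _ => Finset.mem_univ _)
  have h2 : ∀ w : ↥C → Fin k,
      (B.filter (fun g => r g = w)).card
        = (B.filter (fun g => ∀ x : ↥D, ↑x ∈ C → g x = v ↑x)).card := by
    intro w
    apply Finset.card_bij'
      (i := fun g _ => fun x : ↥D => if h : (x : X) ∈ C then v ↑x else g x)
      (j := fun g _ => fun x : ↥D => if h : (x : X) ∈ C then w ⟨↑x, h⟩ else g x)
    · -- i maps into target
      intro g hg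
      rw [Finset.mem_filter] at hg ⊢
      refine ⟨hB g _ (fun x hx => by simp [dif_neg hx]) hg.1, fun x hx => by simp [dif_pos hx]⟩
    · -- j maps into source
      intro g hg
      rw [Finset.mem_filter] at hg ⊢
      refine ⟨hB g _ (fun x hx => by simp [dif_neg hx]) hg.1, ?_⟩
      funext x
      show (if h : ((⟨↑x, hC x.2⟩ : ↥D) : X) ∈ C then w ⟨↑x, h⟩ else g ⟨↑x, hC x.2⟩) = w x
      rw [dif_pos x.2]
    · -- left inverse
      intro g hg
      rw [Finset.mem_filter] at hg
      funext x
      by_cases h : (x : X) ∈ C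
      · simp only [dif_pos h]
        have : r g ⟨↑x, h⟩ = w ⟨↑x, h⟩ := by rw [hg.2]
        exact this.symm
      · simp [dif_neg h]
    · -- right inverse
      intro g hg
      rw [Finset.mem_filter] at hg
      funext x
      by_cases h : (x : X) ∈ C
      · simp only [dif_pos h]
        exact (hg.2 x h).symm
      · simp [dif_neg h]
  rw [h1]
  simp only [h2]
  rw [Finset.sum_const, Finset.card_univ, Fintype.card_fun, Fintype.card_coe,
    Fintype.card_fin, smul_eq_mul]

lemma G_empty (D : Finset X) : G D (∅ : Finset (PatternOn X k)) = univ := by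
  simp [G]

lemma card_univ_Om (D : Finset X) : (univ : Finset (Om D k)).card = k ^ D.card := by
  rw [Finset.card_univ, Fintype.card_fun, Fintype.card_coe, Fintype.card_fin]

end LLLAux

namespace LLLAux
section Part2

variable {X : Type*} [DecidableEq X] {k : ℕ} [DecidableEq (PatternOn X k)]
variable (D : Finset X) (Φ₀ : Finset (PatternOn X k)) (ω : PatternOn X k → ℝ)

/-- Main inductive claim of the local lemma: the conditional probability of `E φ`
given avoidance of any family `S` is at most `ω φ`. -/
lemma part2 (hk : 0 < k) (hD : ∀ φ ∈ Φ₀, φ.dom ⊆ D)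
    (h01 : ∀ φ ∈ Φ₀, ω φ ∈ Set.Ico (0:ℝ) 1)
    (hlll : ∀ φ ∈ Φ₀, ((k : ℝ))⁻¹ ^ φ.dom.card ≤
      ω φ * ∏ ψ ∈ Φ₀.filter (fun ψ => ψ ≠ φ ∧ (φ.dom ∩ ψ.dom).Nonempty), (1 - ω ψ)) :
    ∀ (n : ℕ), ∀ S ⊆ Φ₀, S.card ≤ n → ∀ φ ∈ Φ₀,
      (((G D S).filter (fun g => extP D g φ)).card : ℝ) ≤ ω φ * (G D S).card := by
  intro n
  induction n using Nat.strong_induction_on with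
  | _ n IH =>
  intro S hS hcard φ hφ
  -- if the cardinality is smaller, use the IH directly
  rcases lt_or_eq_of_le hcard with hlt | hEq
  · exact IH S.card hlt S hS le_rfl φ hφ
  by_cases hφS : φ ∈ S
  · -- trivial case: the filter is empty
    have hempty : (G D S).filter (fun g => extP D g φ) = ∅ := by
      apply Finset.filter_eq_empty_iff.mpr
      intro g hg
      exact mem_G.1 hg φ hφS
    rw [hempty]
    simp only [Finset.card_empty, Nat.cast_zero]
    exact mul_nonneg (h01 φ hφ).1 (Nat.cast_nonneg _)
  -- main case
  set S₁ := S.filter (fun ψ => (φ.dom ∩ ψ.dom).Nonempty) with hS₁def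
  set S₂ := S.filter (fun ψ => ¬ (φ.dom ∩ ψ.dom).Nonempty) with hS₂def
  have hS₂S : S₂ ⊆ S := Finset.filter_subset _ _
  have hS₁S : S₁ ⊆ S := Finset.filter_subset _ _
  have hkR : (0:ℝ) < (k:ℝ) := by exact_mod_cast hk
  -- step 1 : monotonicity
  have step1 : (((G D S).filter (fun g => extP D g φ)).card : ℝ)
      ≤ (((G D S₂).filter (fun g => extP D g φ)).card : ℝ) := by
    exact_mod_cast Finset.card_le_card
      (Finset.monotone_filter_left _ (G_anti hS₂S))
  -- step 2 : independence (slice lemma)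
  have hB : ∀ g g' : Om D k, (∀ x : ↥D, ↑x ∉ φ.dom → g x = g' x) →
      g ∈ G D S₂ → g' ∈ G D S₂ := by
    intro g g' hgg hg
    refine mem_G.2 fun ψ hψ hext => mem_G.1 hg ψ hψ ?_
    intro x hx
    have hxφ : (x : X) ∉ φ.dom := by
      intro hmem
      exact (Finset.mem_filter.1 hψ).2 ⟨x, Finset.mem_inter.2 ⟨hmem, hx⟩⟩
    rw [hgg x hxφ]
    exact hext x hx
  have step2 : ((G D S₂).card : ℝ)
      = (k:ℝ) ^ φ.dom.card * (((G D S₂).filter (fun g => extP D g φ)).card : ℝ) := by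
    have := slice D φ.dom (hD φ hφ) (G D S₂) hB φ.val
    exact_mod_cast congrArg (Nat.cast (R := ℝ)) this
  have step2' : (((G D S₂).filter (fun g => extP D g φ)).card : ℝ)
      = (k:ℝ)⁻¹ ^ φ.dom.card * ((G D S₂).card : ℝ) := by
    rw [step2, inv_pow]
    field_simp
  -- step 3 : chain bound on the denominator
  have hωφ0 : (0:ℝ) ≤ ω φ := (h01 φ hφ).1
  have chain : ∀ T ⊆ S₁,
      (∏ ψ ∈ T, (1 - ω ψ)) * ((G D S₂).card : ℝ) ≤ ((G D (S₂ ∪ T)).card : ℝ) := by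
    intro T
    induction T using Finset.induction_on with
    | empty => simp
    | @insert a T' ha IH2 =>
      intro hins
      have haS₁ : a ∈ S₁ := hins (Finset.mem_insert_self _ _)
      have hT' : T' ⊆ S₁ := (Finset.subset_insert _ _).trans hins
      have haS : a ∈ S := hS₁S haS₁
      have haΦ : a ∈ Φ₀ := hS haS
      set U := S₂ ∪ T' with hU
      have hUS : U ⊆ S.erase a := by
        apply Finset.union_subset
        · intro ψ hψ
          refine Finset.mem_erase.2 ⟨?_, hS₂S hψ⟩
          rintro rfl
          exact (Finset.mem_filter.1 hψ).2 (Finset.mem_filter.1 haS₁).2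
        · intro ψ hψ
          refine Finset.mem_erase.2 ⟨?_, hS₁S (hT' hψ)⟩
          rintro rfl
          exact ha hψ
      have hUΦ : U ⊆ Φ₀ := (hUS.trans (Finset.erase_subset _ _)).trans hS
      have hUlt : U.card < n := by
        have h1 : U.card ≤ (S.erase a).card := Finset.card_le_card hUS
        have h2 : (S.erase a).card = S.card - 1 := Finset.card_erase_of_mem haS
        have h3 : 0 < S.card := Finset.card_pos.2 ⟨a, haS⟩
        omega
      have bound := IH U.card hUlt U hUΦ le_rfl a haΦ
      have cardid := card_G_insert D a U
      have hcastid : (((G D U).filter (fun g => extP D g a)).card : ℝ)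
          + ((G D (insert a U)).card : ℝ) = ((G D U).card : ℝ) := by
        exact_mod_cast congrArg (Nat.cast (R := ℝ)) cardid
      have hstep : (1 - ω a) * ((G D U).card : ℝ) ≤ ((G D (insert a U)).card : ℝ) := by
        nlinarith [bound, hcastid]
      have hω1 : (0:ℝ) ≤ 1 - ω a := by
        have := (h01 a haΦ).2
        linarith
      have hprodT : (∏ ψ ∈ T', (1 - ω ψ)) * ((G D S₂).card : ℝ) ≤ ((G D U).card : ℝ) :=
        IH2 hT'
      rw [Finset.union_insert]
      rw [Finset.prod_insert ha]
      calc (1 - ω a) * (∏ ψ ∈ T', (1 - ω ψ)) * ((G D S₂).card : ℝ)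
          = (1 - ω a) * ((∏ ψ ∈ T', (1 - ω ψ)) * ((G D S₂).card : ℝ)) := by ring
        _ ≤ (1 - ω a) * ((G D U).card : ℝ) := by
            exact mul_le_mul_of_nonneg_left hprodT hω1
        _ ≤ ((G D (insert a U)).card : ℝ) := hstep
  have hSsplit : S₂ ∪ S₁ = S := by
    rw [Finset.union_comm]
    exact Finset.filter_union_filter_not_eq _ S
  have chainS : (∏ ψ ∈ S₁, (1 - ω ψ)) * ((G D S₂).card : ℝ) ≤ ((G D S).card : ℝ) := by
    have := chain S₁ le_rfl
    rwa [hSsplit] at this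
  -- step 4 : the LLL hypothesis, restricted to S₁
  set N₀ := Φ₀.filter (fun ψ => ψ ≠ φ ∧ (φ.dom ∩ ψ.dom).Nonempty) with hN₀
  have hsub : S₁ ⊆ N₀ := by
    intro ψ hψ
    have hψS := hS₁S hψ
    refine Finset.mem_filter.2 ⟨hS hψS, ?_, (Finset.mem_filter.1 hψ).2⟩
    rintro rfl
    exact hφS hψS
  have prodle : (∏ ψ ∈ N₀, (1 - ω ψ)) ≤ ∏ ψ ∈ S₁, (1 - ω ψ) := by
    rw [← Finset.prod_sdiff hsub]
    apply mul_le_of_le_one_left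
    · exact Finset.prod_nonneg fun ψ hψ => by
        have := (h01 ψ (hS (hS₁S hψ))).2; linarith
    · apply Finset.prod_le_one
      · intro ψ hψ
        have := (h01 ψ (Finset.mem_filter.1 (Finset.mem_sdiff.1 hψ).1).1).2
        linarith
      · intro ψ hψ
        have := (h01 ψ (Finset.mem_filter.1 (Finset.mem_sdiff.1 hψ).1).1).1
        linarith
  have hkey : ((k : ℝ))⁻¹ ^ φ.dom.card ≤ ω φ * ∏ ψ ∈ S₁, (1 - ω ψ) :=
    (hlll φ hφ).trans (mul_le_mul_of_nonneg_left prodle hωφ0)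
  -- combine
  calc (((G D S).filter (fun g => extP D g φ)).card : ℝ)
      ≤ (((G D S₂).filter (fun g => extP D g φ)).card : ℝ) := step1
    _ = (k:ℝ)⁻¹ ^ φ.dom.card * ((G D S₂).card : ℝ) := step2'
    _ ≤ (ω φ * ∏ ψ ∈ S₁, (1 - ω ψ)) * ((G D S₂).card : ℝ) :=
        mul_le_mul_of_nonneg_right hkey (Nat.cast_nonneg _)
    _ = ω φ * ((∏ ψ ∈ S₁, (1 - ω ψ)) * ((G D S₂).card : ℝ)) := by ring
    _ ≤ ω φ * ((G D S).card : ℝ) := mul_le_mul_of_nonneg_left chainS hωφ0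


/-- Positivity of the good set. -/
lemma part1 (hk : 0 < k) (hD : ∀ φ ∈ Φ₀, φ.dom ⊆ D)
    (h01 : ∀ φ ∈ Φ₀, ω φ ∈ Set.Ico (0:ℝ) 1)
    (hlll : ∀ φ ∈ Φ₀, ((k : ℝ))⁻¹ ^ φ.dom.card ≤
      ω φ * ∏ ψ ∈ Φ₀.filter (fun ψ => ψ ≠ φ ∧ (φ.dom ∩ ψ.dom).Nonempty), (1 - ω ψ)) :
    ∀ S ⊆ Φ₀, 0 < ((G D S).card : ℝ) := by
  intro S
  induction S using Finset.induction_on with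
  | empty =>
    intro _
    rw [G_empty, card_univ_Om]
    positivity
  | @insert a S ha IH =>
    intro hins
    have haΦ : a ∈ Φ₀ := hins (Finset.mem_insert_self _ _)
    have hSΦ : S ⊆ Φ₀ := (Finset.subset_insert _ _).trans hins
    have hpos := IH hSΦ
    have bound := part2 D Φ₀ ω hk hD h01 hlll S.card S hSΦ le_rfl a haΦ
    have cardid := card_G_insert D a S
    have hcast : (((G D S).filter (fun g => extP D g a)).card : ℝ)
        + ((G D (insert a S)).card : ℝ) = ((G D S).card : ℝ) := by
      exact_mod_cast congrArg (Nat.cast (R := ℝ)) cardid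
    have hω1 : ω a < 1 := (h01 a haΦ).2
    nlinarith [bound, hcast, hpos]

/-- Finite version of the LLL. -/
lemma finite_LLL (hk : 2 ≤ k)
    (h01 : ∀ φ ∈ Φ₀, ω φ ∈ Set.Ico (0:ℝ) 1)
    (hlll : ∀ φ ∈ Φ₀, ((k : ℝ))⁻¹ ^ φ.dom.card ≤
      ω φ * ∏ ψ ∈ Φ₀.filter (fun ψ => ψ ≠ φ ∧ (φ.dom ∩ ψ.dom).Nonempty), (1 - ω ψ)) :
    ∃ f : X → Fin k, ∀ φ ∈ Φ₀, ¬ φ.ExtendedBy f := by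
  have hk0 : 0 < k := by omega
  set D := Φ₀.biUnion PatternOn.dom with hD
  have hDsub : ∀ φ ∈ Φ₀, φ.dom ⊆ D := fun φ hφ => Finset.subset_biUnion_of_mem _ hφ
  have hpos := part1 D Φ₀ ω hk0 hDsub h01 hlll Φ₀ le_rfl
  have hne : (G D Φ₀).Nonempty := by
    rw [← Finset.card_pos]
    exact_mod_cast hpos
  obtain ⟨g, hg⟩ := hne
  refine ⟨fun x => if h : x ∈ D then g ⟨x, h⟩ else ⟨0, hk0⟩, ?_⟩
  intro φ hφ hext
  apply mem_G.1 hg φ hφ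
  intro x hx
  have : (dite ((x:X) ∈ D) (fun h => g ⟨↑x, h⟩) (fun _ => (⟨0, hk0⟩ : Fin k))) = φ.val ↑x :=
    hext ↑x hx
  rwa [dif_pos x.2] at this

end Part2
end LLLAux

namespace LLLAux

/-- A product of factors in `[0,1]` is at most any of its finite subproducts. -/
lemma tprod_le_prod {ι : Type*} (f : ι → ℝ) (h0 : ∀ i, 0 ≤ f i) (h1 : ∀ i, f i ≤ 1)
    (s : Finset ι) : ∏' i, f i ≤ ∏ i ∈ s, f i := by
  classical
  have hanti : Antitone (fun t : Finset ι => ∏ i ∈ t, f i) := by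
    intro t t' htt'
    dsimp only
    rw [← Finset.prod_sdiff htt']
    exact mul_le_of_le_one_left (Finset.prod_nonneg fun i _ => h0 i)
      (Finset.prod_le_one (fun i _ => h0 i) (fun i _ => h1 i))
  have hbdd : BddBelow (Set.range fun t : Finset ι => ∏ i ∈ t, f i) :=
    ⟨0, by rintro x ⟨t, rfl⟩; exact Finset.prod_nonneg fun i _ => h0 i⟩
  have hhp : HasProd f (⨅ t : Finset ι, ∏ i ∈ t, f i) :=
    tendsto_atTop_ciInf hanti hbdd
  rw [hhp.tprod_eq]
  exact ciInf_le hbdd s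

end LLLAux


/-- **Compactness version of the LLL.** If `X` is any set and `Φ` is a set of finite partial
functions `X ⇀ k` which is correct for the LLL, then there is a map `f : X → k` not
extending any pattern in `Φ`. -/
theorem compactness_LLL {X : Type*} [DecidableEq X] {k : ℕ} (hk : 2 ≤ k)
    (Φ : Set (PatternOn X k)) (ω : PatternOn X k → ℝ) (hω : IsLLLWitness Φ ω) :
    ∃ f : X → Fin k, ∀ φ ∈ Φ, ¬ φ.ExtendedBy f := by
  classical
  obtain ⟨h01, hlll⟩ := hω
  -- the finite case
  have hfin : ∀ Φ₀ : Finset (PatternOn X k), ↑Φ₀ ⊆ Φ →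
      ∃ f : X → Fin k, ∀ φ ∈ Φ₀, ¬ φ.ExtendedBy f := by
    intro Φ₀ hΦ₀
    apply LLLAux.finite_LLL Φ₀ ω hk (fun φ hφ => h01 φ (hΦ₀ hφ))
    intro φ hφ
    have hφΦ : φ ∈ Φ := hΦ₀ hφ
    refine (hlll φ hφΦ).trans ?_
    apply mul_le_mul_of_nonneg_left ?_ (h01 φ hφΦ).1
    -- tprod over the full neighborhood is at most the finite product
    set N₀ := Φ₀.filter (fun ψ => ψ ≠ φ ∧ (φ.dom ∩ ψ.dom).Nonempty) with hN₀
    have hmem : ∀ ψ : ↥N₀, (ψ : PatternOn X k) ∈ nbhd φ Φ := by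
      rintro ⟨ψ, hψ⟩
      obtain ⟨hψΦ₀, hne, hint⟩ := Finset.mem_filter.1 hψ
      exact ⟨hΦ₀ hψΦ₀, hne, hint⟩
    set s : Finset ↥(nbhd φ Φ) := N₀.attach.image (fun ψ => ⟨ψ.1, hmem ψ⟩) with hs
    have hprod : ∏ x ∈ s, (1 - ω x.1) = ∏ ψ ∈ N₀, (1 - ω ψ) := by
      rw [hs, Finset.prod_image]
      · exact Finset.prod_attach N₀ (fun ψ => 1 - ω ψ)
      · intro a _ b _ hab
        rw [Subtype.mk.injEq] at hab
        exact Subtype.ext hab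
    rw [← hprod]
    apply LLLAux.tprod_le_prod
    · rintro ⟨ψ, hψΦ, _, _⟩
      have := (h01 ψ hψΦ).2
      simp only
      linarith
    · rintro ⟨ψ, hψΦ, _, _⟩
      have := (h01 ψ hψΦ).1
      simp only
      linarith
  -- compactness
  set K : Finset (PatternOn X k) → Set (X → Fin k) :=
    fun t => ⋂ φ ∈ t.filter (· ∈ Φ), {f | ¬ φ.ExtendedBy f} with hK
  have hclosed : ∀ t, IsClosed (K t) := by
    intro t
    apply isClosed_biInter
    intro φ _
    have : {f : X → Fin k | φ.ExtendedBy f} = ⋂ x ∈ φ.dom, {f | f x = φ.val x} := by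
      ext f
      simp [PatternOn.ExtendedBy]
    have hopen : IsOpen {f : X → Fin k | φ.ExtendedBy f} := by
      rw [this]
      apply isOpen_biInter_finset
      intro x _
      show IsOpen ((fun f : X → Fin k => f x) ⁻¹' {φ.val x})
      exact IsOpen.preimage (continuous_apply x) (isOpen_discrete _)
    exact isClosed_compl_iff.2 hopen
  have hcompact : ∀ t, IsCompact (K t) := fun t => (hclosed t).isCompact
  have hnonempty : ∀ t, (K t).Nonempty := by
    intro t
    obtain ⟨f, hf⟩ := hfin (t.filter (· ∈ Φ)) (fun φ hφ => (Finset.mem_filter.1 hφ).2)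
    exact ⟨f, Set.mem_iInter₂.2 fun φ hφ => hf φ hφ⟩
  have hdir : Directed (· ⊇ ·) K := by
    intro t u
    refine ⟨t ∪ u, ?_, ?_⟩ <;>
    · intro f hf
      apply Set.mem_iInter₂.2
      intro φ hφ
      apply Set.mem_iInter₂.1 hf φ
      obtain ⟨h1, h2⟩ := Finset.mem_filter.1 hφ
      exact Finset.mem_filter.2 ⟨Finset.mem_union.2 (by tauto), h2⟩
  obtain ⟨f, hf⟩ := IsCompact.nonempty_iInter_of_directed_nonempty_isCompact_isClosed
    K hdir hnonempty hcompact hclosed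
  refine ⟨f, fun φ hφ => ?_⟩
  have := Set.mem_iInter.1 hf {φ}
  exact Set.mem_iInter₂.1 this φ (Finset.mem_filter.2 ⟨Finset.mem_singleton_self _, hφ⟩)
end
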